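/- Let Δ_(1) ≤ Δ_(2) ≤ ... ≤ Δ_(n) be a nondecreasing sequence of positive reals and define H̃ = max_{i ∈ [n]} i * Δ_(i)^{-2} and H = ∑_{i=1}^{n} Δ_(i)^{-2}. Then H̃ ≤ H ≤ H̃ * (1 + log n), where log denotes the natural logarithm. (It suffices to prove H̃ ≤ H ≤ tlog(n) * H̃ with tlog(n) = ∑_{i=1}^n 1/i.) -/
import Mathlib


theorem hardness_sandwich (n : ℕ) (hn : 1 ≤ n) (Δ : ℕ → ℝ)
    (hpos : ∀ i ∈ Finset.Icc 1 n, 0 < Δ i)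
    (hmono : ∀ i ∈ Finset.Icc 1 n, ∀ j ∈ Finset.Icc 1 n, i ≤ j → Δ i ≤ Δ j)
    (Htil : ℝ)
    (hHtil : Htil = (Finset.Icc 1 n).sup' (Finset.nonempty_Icc.mpr hn)
      (fun i => (i : ℝ) / (Δ i) ^ 2)) :
    Htil ≤ (∑ i ∈ Finset.Icc 1 n, 1 / (Δ i) ^ 2) ∧
    (∑ i ∈ Finset.Icc 1 n, 1 / (Δ i) ^ 2) ≤ (∑ i ∈ Finset.Icc 1 n, (1 : ℝ) / i) * Htil := by
  constructor
  · rw [hHtil]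
    apply Finset.sup'_le
    intro i hi
    simp only [Finset.mem_Icc] at hi
    have hΔi : 0 < Δ i := hpos i (by simp [Finset.mem_Icc, hi])
    have key : (i : ℝ) / (Δ i) ^ 2 ≤ ∑ j ∈ Finset.Icc 1 i, 1 / (Δ j) ^ 2 := by
      have : (i : ℝ) / (Δ i) ^ 2 = ∑ j ∈ Finset.Icc 1 i, 1 / (Δ i) ^ 2 := by
        rw [Finset.sum_const, Nat.card_Icc]
        simp [div_eq_mul_inv, mul_comm]
      rw [this]
      apply Finset.sum_le_sum
      intro j hj
      simp only [Finset.mem_Icc] at hj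
      have hjn : j ∈ Finset.Icc 1 n := Finset.mem_Icc.mpr ⟨hj.1, hj.2.trans hi.2⟩
      have hΔj : 0 < Δ j := hpos j hjn
      have hle : Δ j ≤ Δ i := hmono j hjn i (Finset.mem_Icc.mpr hi) hj.2
      apply one_div_le_one_div_of_le (by positivity)
      exact pow_le_pow_left₀ hΔj.le hle 2
    refine key.trans (Finset.sum_le_sum_of_subset_of_nonneg ?_ ?_)
    · exact Finset.Icc_subset_Icc_right hi.2
    · intro j _ _
      positivity
  · rw [Finset.sum_mul]
    apply Finset.sum_le_sum
    intro i hi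
    simp only [Finset.mem_Icc] at hi
    have hipos : (0 : ℝ) < i := by exact_mod_cast hi.1
    have hΔi : 0 < Δ i := hpos i (Finset.mem_Icc.mpr hi)
    have hsup : (i : ℝ) / (Δ i) ^ 2 ≤ Htil := by
      rw [hHtil]
      exact Finset.le_sup' (fun j : ℕ => (j : ℝ) / (Δ j) ^ 2) (Finset.mem_Icc.mpr hi)
    calc 1 / (Δ i) ^ 2 = 1 / (i : ℝ) * ((i : ℝ) / (Δ i) ^ 2) := by
          field_simp
      _ ≤ 1 / (i : ℝ) * Htil := by
          apply mul_le_mul_of_nonneg_left hsup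
          positivity
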